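/- The union of an open set S and a set D discrete in itself with S ∩ D = ∅ in a Polish space is a Δ⁰₂ set. -/

import Mathlib

def IsFSigma {X : Type*} [TopologicalSpace X] (E : Set X) : Prop :=
  ∃ f : ℕ → Set X, (∀ n, IsClosed (f n)) ∧ E = ⋃ n, f n

/-- `D` is discrete in itself: each point of `D` has a neighborhood
meeting `D` only in that point. -/
def DiscreteInItself {X : Type*} [TopologicalSpace X] (D : Set X) : Prop :=
  ∀ x ∈ D, ∃ W : Set X, IsOpen W ∧ x ∈ W ∧ W ∩ D = {x}

/-!
A set discrete in itself is locally closed: if `W ∩ D = {x}` with `W` open, then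
`W ∩ closure D ⊆ closure {x} = {x}`. In a metrizable space every locally closed set `U ∩ Z`
is both `Gδ` and `Fσ`, since open sets are `Fσ` and closed sets are `Gδ`.
-/

open Set

section

variable {X : Type*} [TopologicalSpace X] {s t : Set X}

theorem IsFSigma.union (hs : IsFSigma s) (ht : IsFSigma t) : IsFSigma (s ∪ t) := by
  obtain ⟨f, hf, rfl⟩ := hs
  obtain ⟨g, hg, rfl⟩ := ht
  exact ⟨fun n => f n ∪ g n, fun n => (hf n).union (hg n), (iUnion_union_distrib f g).symm⟩

theorem IsFSigma.inter_isClosed (hs : IsFSigma s) (ht : IsClosed t) : IsFSigma (s ∩ t) := by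
  obtain ⟨f, hf, rfl⟩ := hs
  exact ⟨fun n => f n ∩ t, fun n => (hf n).inter ht, iUnion_inter t f⟩

theorem IsOpen.isFSigma [PerfectlyNormalSpace X] (hs : IsOpen s) : IsFSigma s := by
  obtain ⟨f, hf, hsf⟩ := isGδ_iff_eq_iInter_nat.1 hs.isClosed_compl.isGδ
  refine ⟨fun n => (f n)ᶜ, fun n => (hf n).isClosed_compl, ?_⟩
  rw [← compl_iInter, ← hsf, compl_compl]

theorem IsLocallyClosed.isFSigma [PerfectlyNormalSpace X] (hs : IsLocallyClosed s) :
    IsFSigma s := by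
  obtain ⟨U, Z, hU, hZ, rfl⟩ := hs
  exact hU.isFSigma.inter_isClosed hZ

theorem IsLocallyClosed.isGδ [PerfectlyNormalSpace X] (hs : IsLocallyClosed s) : IsGδ s := by
  obtain ⟨U, Z, hU, hZ, rfl⟩ := hs
  exact hU.isGδ.inter hZ.isGδ

theorem DiscreteInItself.isLocallyClosed [T1Space X] (hs : DiscreteInItself s) :
    IsLocallyClosed s := by
  refine ((isLocallyClosed_tfae s).out 0 3).2 fun x hx => ?_
  obtain ⟨W, hW, hxW, hWs⟩ := hs x hx
  refine ⟨W, hxW, hW, fun y hy => ?_⟩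
  have hyx : y ∈ closure {x} := hWs ▸ hW.inter_closure hy
  rw [closure_singleton, mem_singleton_iff] at hyx
  exact hyx ▸ hx

end

theorem open_union_discrete_delta02_general {X : Type*} [TopologicalSpace X] [PolishSpace X]
    (S D : Set X) (hS : IsOpen S) (hD : DiscreteInItself D) :
    IsFSigma (S ∪ D) ∧ IsGδ (S ∪ D) := by
  have hDlc : IsLocallyClosed D := hD.isLocallyClosed
  exact ⟨hS.isFSigma.union hDlc.isFSigma, hS.isGδ.union hDlc.isGδ⟩

theorem open_union_discrete_delta02 {X : Type*} [TopologicalSpace X] [PolishSpace X]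
    (S D : Set X) (hS : IsOpen S) (hD : DiscreteInItself D) (hdisj : S ∩ D = ∅) :
    IsFSigma (S ∪ D) ∧ IsGδ (S ∪ D) :=
  open_union_discrete_delta02_general S D hS hD
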